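/- For any two finitely supported probability distributions {y_i} and {z_i} on the same finite index set with z_i > 0 whenever y_i > 0, the total squared deviation is bounded by the KL divergence: ∑_i (y_i − z_i)² ≤ ∑_i y_i ln(y_i/z_i). -/

import Mathlib

/-!
The pointwise bound `a log (a / b) ≥ a - b + 3 (a - b)² / (2a + 4b)` comes from the rational
lower bound `log t ≥ (t - 1) (5t + 1) / (2t (t + 2))`, which agrees with `log` to third order
at `t = 1`. Summed over `i`, it gives `KL(y ‖ z) ≥ ∑ 3 (y - z)² / (2y + 4z)`.
Cauchy–Schwarz against the weights `(2y + 4z) / 3`, which sum to `2`, turns this into Pinsker's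
inequality `(∑ |y - z|)² ≤ 2 KL(y ‖ z)`. Finally, since `y - z` sums to zero, each
`|y i - z i|` is at most half of `∑ |y - z|`, so `∑ (y - z)² ≤ (∑ |y - z|)² / 2`.
-/

open Real

lemma hasDerivAt_log_sub_sub_one_mul_div {t : ℝ} (ht : 0 < t) :
    HasDerivAt (fun u => log u - (u - 1) * (5 * u + 1) / (2 * u * (u + 2)))
      ((t - 1) ^ 3 / (t ^ 2 * (t + 2) ^ 2)) t := by
  have hnum : HasDerivAt (fun u : ℝ => (u - 1) * (5 * u + 1)) (10 * t - 4) t :=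
    (((hasDerivAt_id' t).sub_const 1).mul
      (((hasDerivAt_id' t).const_mul 5).add_const 1)).congr_deriv (by ring)
  have hden : HasDerivAt (fun u : ℝ => 2 * u * (u + 2)) (4 * t + 4) t :=
    (((hasDerivAt_id' t).const_mul 2).mul ((hasDerivAt_id' t).add_const 2)).congr_deriv
      (by ring)
  refine ((hasDerivAt_log ht.ne').sub (hnum.div hden (by positivity))).congr_deriv ?_
  field_simp
  ring

open Set in
lemma sub_one_mul_div_le_log {t : ℝ} (ht : 0 < t) :
    (t - 1) * (5 * t + 1) / (2 * t * (t + 2)) ≤ log t := by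
  set g : ℝ → ℝ := fun u => log u - (u - 1) * (5 * u + 1) / (2 * u * (u + 2))
  have hcont : ∀ D ⊆ Ioi (0 : ℝ), ContinuousOn g D := fun D hD u hu =>
    (hasDerivAt_log_sub_sub_one_mul_div (hD hu)).continuousAt.continuousWithinAt
  have hderiv : ∀ D ⊆ Ioi (0 : ℝ), ∀ u ∈ D,
      HasDerivWithinAt g ((u - 1) ^ 3 / (u ^ 2 * (u + 2) ^ 2)) D u := fun D hD u hu =>
    (hasDerivAt_log_sub_sub_one_mul_div (hD hu)).hasDerivWithinAt
  have hg_one : g 1 = 0 := by norm_num [g]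
  suffices 0 ≤ g t by simpa [g] using this
  rcases le_total 1 t with h | h
  · have hmono : MonotoneOn g (Ici 1) :=
      monotoneOn_of_hasDerivWithinAt_nonneg (convex_Ici 1)
        (hcont _ fun u (hu : 1 ≤ u) => zero_lt_one.trans_le hu)
        (hderiv _ (by simp))
        (fun u (hu : u ∈ interior (Ici 1)) => by
          have : 0 ≤ u - 1 := by simp at hu; linarith
          positivity)
    simpa [hg_one] using hmono self_mem_Ici h h
  · have hanti : AntitoneOn g (Ioc 0 1) :=
      antitoneOn_of_hasDerivWithinAt_nonpos (convex_Ioc 0 1)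
        (hcont _ Ioc_subset_Ioi_self)
        (hderiv _ (by simp [Ioo_subset_Ioi_self]))
        (fun u (hu : u ∈ interior (Ioc 0 1)) => by
          have : u - 1 ≤ 0 := by simp at hu; linarith
          exact div_nonpos_of_nonpos_of_nonneg (Odd.pow_nonpos (by decide) this)
            (by positivity))
    simpa [hg_one] using hanti ⟨ht, h⟩ ⟨zero_lt_one, le_rfl⟩ h

lemma sub_add_sq_div_le_mul_log_div {a b : ℝ} (ha : 0 ≤ a) (hb : 0 ≤ b)
    (hab : 0 < a → 0 < b) :
    a - b + 3 * (a - b) ^ 2 / (2 * a + 4 * b) ≤ a * log (a / b) := by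
  rcases ha.eq_or_lt with rfl | ha
  · rcases hb.eq_or_lt with rfl | hb
    · simp
    · have : 3 * (0 - b) ^ 2 / (2 * 0 + 4 * b) = 3 / 4 * b := by field_simp; ring
      simp only [this, zero_mul]
      linarith
  · have hb := hab ha
    calc a - b + 3 * (a - b) ^ 2 / (2 * a + 4 * b)
        = a * ((a / b - 1) * (5 * (a / b) + 1) / (2 * (a / b) * (a / b + 2))) := by
          field_simp; ring
      _ ≤ a * log (a / b) := by gcongr; exact sub_one_mul_div_le_log (by positivity)

open Finset

lemma two_mul_abs_le_sum_abs_of_sum_eq_zero {ι : Type*} {s : Finset ι} {x : ι → ℝ}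
    (hx : ∑ j ∈ s, x j = 0) {i : ι} (hi : i ∈ s) : 2 * |x i| ≤ ∑ j ∈ s, |x j| := by
  classical
  have hrest : x i = -∑ j ∈ s.erase i, x j := by
    linarith [add_sum_erase s x hi]
  calc 2 * |x i| = |x i| + |∑ j ∈ s.erase i, x j| := by rw [hrest, abs_neg]; ring
    _ ≤ |x i| + ∑ j ∈ s.erase i, |x j| := by gcongr; exact abs_sum_le_sum_abs _ _
    _ = ∑ j ∈ s, |x j| := add_sum_erase s (fun j => |x j|) hi

lemma sum_sq_le_sq_sum_abs_div_two_of_sum_eq_zero {ι : Type*} {s : Finset ι} {x : ι → ℝ}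
    (hx : ∑ j ∈ s, x j = 0) : ∑ i ∈ s, x i ^ 2 ≤ (∑ i ∈ s, |x i|) ^ 2 / 2 := by
  calc ∑ i ∈ s, x i ^ 2 = ∑ i ∈ s, |x i| * |x i| := by simp only [abs_mul_abs_self, sq]
    _ ≤ ∑ i ∈ s, |x i| * ((∑ j ∈ s, |x j|) / 2) := by
        gcongr with i hi
        linarith [two_mul_abs_le_sum_abs_of_sum_eq_zero hx hi]
    _ = (∑ i ∈ s, |x i|) ^ 2 / 2 := by rw [← sum_mul]; ring

section Pinsker

variable {ι : Type*} [Fintype ι] {y z : ι → ℝ}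

lemma sum_sq_sub_div_le_sum_mul_log_div (hy : ∀ i, 0 ≤ y i) (hz : ∀ i, 0 ≤ z i)
    (hsum : ∑ i, y i = ∑ i, z i) (hpos : ∀ i, 0 < y i → 0 < z i) :
    ∑ i, 3 * (y i - z i) ^ 2 / (2 * y i + 4 * z i) ≤ ∑ i, y i * log (y i / z i) :=
  calc ∑ i, 3 * (y i - z i) ^ 2 / (2 * y i + 4 * z i)
      = ∑ i, (y i - z i + 3 * (y i - z i) ^ 2 / (2 * y i + 4 * z i)) := by
        rw [sum_add_distrib, sum_sub_distrib, hsum, sub_self, zero_add]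
    _ ≤ ∑ i, y i * log (y i / z i) :=
        sum_le_sum fun i _ => sub_add_sq_div_le_mul_log_div (hy i) (hz i) (hpos i)

theorem sq_sum_abs_sub_le_two_mul_sum_mul_log_div (hy : ∀ i, 0 ≤ y i) (hz : ∀ i, 0 ≤ z i)
    (hys : ∑ i, y i = 1) (hzs : ∑ i, z i = 1) (hpos : ∀ i, 0 < y i → 0 < z i) :
    (∑ i, |y i - z i|) ^ 2 ≤ 2 * ∑ i, y i * log (y i / z i) := by
  have hw : ∀ i, 0 ≤ 2 * y i + 4 * z i := fun i => by linarith [hy i, hz i]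
  have hcs := sum_sq_le_sum_mul_sum_of_sq_le_mul univ
    (r := fun i => |y i - z i|) (f := fun i => 3 * (y i - z i) ^ 2 / (2 * y i + 4 * z i))
    (g := fun i => (2 * y i + 4 * z i) / 3)
    (fun i _ => div_nonneg (by positivity) (hw i)) (fun i _ => div_nonneg (hw i) (by norm_num))
    (fun i _ => by
      rcases (hw i).eq_or_lt with h | h
      · have : y i - z i = 0 := by linarith [hy i, hz i]
        simp [this]
      · rw [sq_abs, div_mul_div_comm, mul_comm, ← div_mul_div_comm, div_self h.ne', one_mul,
          mul_div_cancel_left₀ _ three_ne_zero])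
  have hwsum : ∑ i, (2 * y i + 4 * z i) / 3 = 2 := by
    rw [← sum_div, sum_add_distrib, ← mul_sum, ← mul_sum, hys, hzs]; norm_num
  rw [hwsum] at hcs
  linarith [sum_sq_sub_div_le_sum_mul_log_div hy hz (hys.trans hzs.symm) hpos]

end Pinsker

/-- entropy inequality: for finitely supported probability
distributions `y`, `z` on the same finite index set with `z i > 0` whenever
`y i > 0`, `∑ i (y i − z i)² ≤ ∑ i y i · ln(y i / z i)`.
(In Lean, `Real.log 0 = 0`, so the terms with `y i = 0` vanish, matching the
convention `0·ln(0/z) = 0`.) -/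
theorem entropy_inequality {ι : Type*} [Fintype ι] (y z : ι → ℝ)
    (hy : ∀ i, 0 ≤ y i) (hz : ∀ i, 0 ≤ z i)
    (hys : ∑ i, y i = 1) (hzs : ∑ i, z i = 1)
    (hpos : ∀ i, 0 < y i → 0 < z i) :
    ∑ i, (y i - z i) ^ 2 ≤ ∑ i, y i * Real.log (y i / z i) := by
  have hdiff : ∑ i, (y i - z i) = 0 := by rw [sum_sub_distrib, hys, hzs, sub_self]
  calc ∑ i, (y i - z i) ^ 2 ≤ (∑ i, |y i - z i|) ^ 2 / 2 :=
        sum_sq_le_sq_sum_abs_div_two_of_sum_eq_zero hdiff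
    _ ≤ ∑ i, y i * Real.log (y i / z i) := by
        linarith [sq_sum_abs_sub_le_two_mul_sum_mul_log_div hy hz hys hzs hpos]
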